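/- Let Σ ⊆ {T, B, 4, D}. For all h and n, ⊢_{KΣ} ⊕C_{h,n}. -/

import Mathlib

/-!
Already in `K`, the members of `C_{h,n}` are provably exhaustive and pairwise incompatible,
which is what `⊕C_{h,n}` expresses. At height `0` both facts are propositional. At height
`h + 1`, exhaustiveness comes from taking `S` to be the set of those `ψ ∈ C_{h,n}` with `◇ψ`:
`□∨C_{h,n}` together with `□¬ψ` for the remaining `ψ` gives `□∨S`. Two members with different
`S` are separated by some `ψ` lying in one `S` but not in the other `S'`: the first asserts
`◇ψ`, while the second asserts `□∨S'`, hence `□¬ψ` by the incompatibility of `ψ` with every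
member of `S'` one height lower. All purely propositional steps are discharged by the
completeness of the Hilbert calculus for tautologies (Kalmár's lemma), reading variables,
constants and boxed formulas as atoms.
-/

namespace ModalSOA

/-- Modal formulas: propositional variables, propositional constants, ⊥, →, □. -/
inductive Formula : Type
  | var : ℕ → Formula
  | const : ℕ → Formula
  | bot : Formula
  | imp : Formula → Formula → Formula
  | box : Formula → Formula
deriving DecidableEq

namespace Formula

/-- ¬φ := φ → ⊥ -/
def neg (φ : Formula) : Formula := φ.imp bot

/-- ⊤ := ¬⊥ -/
def top : Formula := bot.neg

/-- ◇φ := ¬□¬φ -/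
def dia (φ : Formula) : Formula := φ.neg.box.neg

/-- φ ∧ ψ := ¬(φ → ¬ψ) -/
def and (φ ψ : Formula) : Formula := (φ.imp ψ.neg).neg

/-- φ ∨ ψ := ¬φ → ψ -/
def or (φ ψ : Formula) : Formula := φ.neg.imp ψ

/-- Uniform substitution: substitute formulas for propositional variables,
    leaving propositional constants fixed. -/
def subst (σ : ℕ → Formula) : Formula → Formula
  | var n => σ n
  | const n => const n
  | bot => bot
  | imp φ ψ => imp (φ.subst σ) (ψ.subst σ)
  | box φ => box (φ.subst σ)

end Formula

open Formula

/-- The propositional variable p. -/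
def pv : Formula := .var 0
/-- The propositional variable q. -/
def qv : Formula := .var 1
/-- The propositional variable r. -/
def rv : Formula := .var 2

/-- The seven extra modal axioms considered: T, B, 4, 5, D, .2, L. -/
inductive ModalAxiom : Type
  | T | B | four | five | D | dot2 | L
deriving DecidableEq

/-- The modal formula corresponding to each axiom name. -/
def ModalAxiom.fml : ModalAxiom → Formula
  | .T => pv.box.imp pv                       -- □p → p
  | .B => pv.imp pv.dia.box                   -- p → □◇p
  | .four => pv.box.imp pv.box.box            -- □p → □□p
  | .five => pv.dia.imp pv.dia.box            -- ◇p → □◇p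
  | .D => pv.box.imp pv.dia                   -- □p → ◇p
  | .dot2 => pv.box.dia.imp pv.dia.box        -- ◇□p → □◇p
  | .L => (pv.box.imp pv).box.imp pv.box      -- □(□p→p) → □p

/-- Hilbert-style provability for the normal modal logic with extra axioms `Ax`:
classical propositional axioms, K, members of `Ax`, modus ponens, necessitation,
and uniform substitution. -/
inductive Prv (Ax : Set Formula) : Formula → Prop
  | ax1 : Prv Ax (pv.imp (qv.imp pv))
  | ax2 : Prv Ax ((pv.imp (qv.imp rv)).imp ((pv.imp qv).imp (pv.imp rv)))
  | ax3 : Prv Ax ((pv.neg.imp qv.neg).imp (qv.imp pv))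
  | axK : Prv Ax ((pv.imp qv).box.imp (pv.box.imp qv.box))
  | extra {φ} : φ ∈ Ax → Prv Ax φ
  | mp {φ ψ} : Prv Ax (φ.imp ψ) → Prv Ax φ → Prv Ax ψ
  | nec {φ} : Prv Ax φ → Prv Ax φ.box
  | subst {φ} (σ : ℕ → Formula) : Prv Ax φ → Prv Ax (φ.subst σ)

/-- The axiom set of the logic KΣ. -/
def KAxioms (Sig : Set ModalAxiom) : Set Formula := ModalAxiom.fml '' Sig

/-- The axiom set of GL = K{L}. -/
def GLAx : Set Formula := KAxioms {ModalAxiom.L}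

/-- Conjunction of a list of formulas (empty conjunction is ⊤). -/
def listConj : List Formula → Formula
  | [] => top
  | [φ] => φ
  | φ :: ψ :: l => φ.and (listConj (ψ :: l))

/-- Disjunction of a list of formulas (empty disjunction is ⊥). -/
def listDisj : List Formula → Formula
  | [] => bot
  | [φ] => φ
  | φ :: ψ :: l => φ.or (listDisj (ψ :: l))

/-- Pbl(Γ, φ): there are ψ₁,…,ψₙ ∈ Γ with ⊢ (ψ₁∧…∧ψₙ) → φ. -/
def Pbl (Ax : Set Formula) (Γ : Set Formula) (φ : Formula) : Prop :=
  ∃ l : List Formula, (∀ ψ ∈ l, ψ ∈ Γ) ∧ Prv Ax ((listConj l).imp φ)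

/-- A formula φ is consistent if ⊬ φ → ⊥. -/
def FmlConsistent (Ax : Set Formula) (φ : Formula) : Prop := ¬ Prv Ax (φ.imp bot)

/-- A set Γ is consistent if ¬Pbl(Γ, ⊥). -/
def SetConsistent (Ax : Set Formula) (Γ : Set Formula) : Prop := ¬ Pbl Ax Γ bot

/-- Γ is maximally consistent: consistent, closed under deduction, and for
every φ, φ ∈ Γ or ¬φ ∈ Γ. -/
def MaxConsistent (Ax : Set Formula) (Γ : Set Formula) : Prop :=
  SetConsistent Ax Γ ∧ (∀ φ, Pbl Ax Γ φ → φ ∈ Γ) ∧ (∀ φ, φ ∈ Γ ∨ φ.neg ∈ Γ)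

/-- Euclidean relation. -/
def Euclidean {W : Type*} (R : W → W → Prop) : Prop := ∀ ⦃x y z⦄, R x y → R x z → R y z

/-- Serial relation. -/
def Serial {W : Type*} (R : W → W → Prop) : Prop := ∀ x, ∃ y, R x y

/-- Directed relation. -/
def Directed {W : Type*} (R : W → W → Prop) : Prop :=
  ∀ ⦃x y z⦄, R x y → R x z → ∃ s, R y s ∧ R z s

/-- No infinite ascending R-sequence. -/
def NoInfiniteAscent {W : Type*} (R : W → W → Prop) : Prop :=
  ¬ ∃ f : ℕ → W, ∀ n, R (f n) (f (n + 1))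

/-- A frame (with relation R) is appropriate to a given modal axiom. -/
def AppropriateTo {W : Type*} (R : W → W → Prop) : ModalAxiom → Prop
  | .T => Reflexive R
  | .B => Symmetric R
  | .four => Transitive R
  | .five => Euclidean R
  | .D => Serial R
  | .dot2 => Directed R
  | .L => Transitive R ∧ NoInfiniteAscent R

/-- A frame is appropriate to Σ if it is appropriate to each member of Σ. -/
def Appropriate {W : Type*} (R : W → W → Prop) (Sig : Set ModalAxiom) : Prop :=
  ∀ a ∈ Sig, AppropriateTo R a

/-- A valuation on a frame: truth values for all formulas, respecting the
Kripke clauses for ⊥, →, □. -/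
structure Valuation {W : Type*} (R : W → W → Prop) where
  val : W → Formula → Bool
  val_bot : ∀ w, val w Formula.bot = false
  val_imp : ∀ w φ ψ, val w (φ.imp ψ) = (!(val w φ) || val w ψ)
  val_box : ∀ w φ, val w φ.box = true ↔ ∀ v, R w v → val v φ = true

/-- F ⊩ φ : every valuation on the frame makes φ true at every world. -/
def FrameForces {W : Type*} (R : W → W → Prop) (φ : Formula) : Prop :=
  ∀ V : Valuation R, ∀ w : W, V.val w φ = true

/-- Height of a formula. -/
def ht : Formula → ℕ
  | .imp φ ψ => max (ht φ) (ht ψ)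
  | .box φ => 1 + ht φ
  | _ => 0

/-- Order of a formula, with respect to the fixed enumeration `atom` of
atomic formulas. -/
def ord : Formula → ℕ
  | .bot => 0
  | .var k => 2 * k + 1
  | .const k => 2 * k + 2
  | .imp φ ψ => max (ord φ) (ord ψ)
  | .box φ => ord φ

/-- A fixed enumeration p₀, p₁, … of the atomic formulas (⊥, variables and
constants), with `ord (atom n) = n`. -/
def atom : ℕ → Formula
  | 0 => .bot
  | n + 1 => if n % 2 = 0 then .var (n / 2) else .const (n / 2)

/-- φ ∈ L_{h,n}. -/
def InL (h n : ℕ) (φ : Formula) : Prop := ht φ ≤ h ∧ ord φ ≤ n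

/-- T̂ for T ⊆ {p₀,…,pₙ}: the conjunction of the atoms in T and the negations
of the remaining atoms among p₀,…,pₙ. -/
def hatT (n : ℕ) (T : List ℕ) : Formula :=
  listConj ((List.range (n + 1)).map (fun i => if i ∈ T then atom i else (atom i).neg))

/-- The canonical formula α_{S,T} = (∧_{ψ∈S} ◇ψ) ∧ □(∨S) ∧ T̂. -/
def canonAlpha (n : ℕ) (S : List Formula) (T : List ℕ) : Formula :=
  (listConj (S.map dia)).and (((listDisj S).box).and (hatT n T))

/-- The canonical formulas C_{h,n} (as a finite list). -/
def C : ℕ → ℕ → List Formula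
  | 0, n => (List.range (n + 1)).sublists.map (hatT n)
  | h + 1, n => (C h n).sublists.flatMap
      (fun S => (List.range (n + 1)).sublists.map (fun T => canonAlpha n S T))

/-- ⊕X := ∨_{α∈X}(α ∧ ∧_{β∈X\{α}} ¬β). -/
def bigOplus (X : List Formula) : Formula :=
  listDisj (X.map (fun α => α.and (listConj ((X.filter (· ≠ α)).map neg))))

/-- The set of subformulas of a formula. -/
def sub : Formula → Finset Formula
  | .imp φ ψ => insert (Formula.imp φ ψ) (sub φ ∪ sub ψ)
  | .box φ => insert φ.box (sub φ)
  | a => {a}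

/-- (W, R, V) is a weak Kripke model of φ: W nonempty and V satisfies the
valuation clauses for ⊥, →, □ on the subformulas of φ. -/
structure IsWeakKripkeModel (φ : Formula) {W : Type*} (R : W → W → Prop)
    (V : W → Formula → Bool) : Prop where
  nonempty : Nonempty W
  val_bot : ∀ w, Formula.bot ∈ sub φ → V w Formula.bot = false
  val_imp : ∀ w ψ θ, ψ.imp θ ∈ sub φ → V w (ψ.imp θ) = (!(V w ψ) || V w θ)
  val_box : ∀ w ψ, ψ.box ∈ sub φ → (V w ψ.box = true ↔ ∀ v, R w v → V v ψ = true)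

/-- W̃ : the KΣ-consistent α ∈ C_{h+1,n} with ⊢ α → φ. -/
def tildeW (Ax : Set Formula) (φ : Formula) (h n : ℕ) : Set Formula :=
  {α | α ∈ C (h + 1) n ∧ FmlConsistent Ax α ∧ Prv Ax (α.imp φ)}

/-- α →c β iff α ∧ ◇β is consistent. -/
def relC (Ax : Set Formula) (α β : Formula) : Prop := FmlConsistent Ax (α.and β.dia)

/-- Ṽ(α, ψ) = 1 iff ⊢ α → ψ. -/
noncomputable def tildeV (Ax : Set Formula) (α ψ : Formula) : Bool :=
  @decide _ (Classical.propDecidable (Prv Ax (α.imp ψ)))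

-- α′ : the unique consistent member of C_{h,n} provably implied by α.
open Classical in
noncomputable def prime (Ax : Set Formula) (h n : ℕ) (α : Formula) : Formula :=
  if hx : ∃ α', α' ∈ C h n ∧ FmlConsistent Ax α' ∧ Prv Ax (α.imp α') then hx.choose
  else Formula.bot

/-- α →m β iff ⊢ α → ◇β′ and every ξ ∈ C_{h,n} with ⊢ β → ◇ξ satisfies ⊢ α → ◇ξ. -/
def relM (Ax : Set Formula) (h n : ℕ) (α β : Formula) : Prop :=
  Prv Ax (α.imp (prime Ax h n β).dia) ∧
  ∀ ξ ∈ C h n, Prv Ax (β.imp ξ.dia) → Prv Ax (α.imp ξ.dia)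

/-- α →d β (for GL) iff α →m β and some γ ∈ C_{h,n} has ⊢ α → ◇γ and ⊢ β → □¬γ. -/
def relD (h n : ℕ) (α β : Formula) : Prop :=
  relM GLAx h n α β ∧
  ∃ γ ∈ C h n, Prv GLAx (α.imp γ.dia) ∧ Prv GLAx (β.imp γ.neg.box)

def substPQR (a b c : Formula) : ℕ → Formula
  | 0 => a
  | 1 => b
  | _ => c

namespace Prv

variable {Ax : Set Formula}

theorem ax1' (a b : Formula) : Prv Ax (a.imp (b.imp a)) := by
  simpa [Formula.subst, substPQR, pv, qv] using (ax1 (Ax := Ax)).subst (substPQR a b a)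

theorem ax2' (a b c : Formula) :
    Prv Ax ((a.imp (b.imp c)).imp ((a.imp b).imp (a.imp c))) := by
  simpa [Formula.subst, substPQR, pv, qv, rv] using (ax2 (Ax := Ax)).subst (substPQR a b c)

theorem ax3' (a b : Formula) : Prv Ax ((a.neg.imp b.neg).imp (b.imp a)) := by
  simpa [Formula.subst, substPQR, pv, qv, Formula.neg] using
    (ax3 (Ax := Ax)).subst (substPQR a b a)

theorem axK' (a b : Formula) : Prv Ax ((a.imp b).box.imp (a.box.imp b.box)) := by
  simpa [Formula.subst, substPQR, pv, qv] using (axK (Ax := Ax)).subst (substPQR a b a)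

theorem imp_self' (a : Formula) : Prv Ax (a.imp a) :=
  ((ax2' a (a.imp a) a).mp (ax1' a (a.imp a))).mp (ax1' a a)

theorem box_mono {a b : Formula} (h : Prv Ax (a.imp b)) : Prv Ax (a.box.imp b.box) :=
  (axK' a b).mp h.nec

end Prv

inductive Deduces (Ax : Set Formula) (Γ : Set Formula) : Formula → Prop
  | hyp {φ} : φ ∈ Γ → Deduces Ax Γ φ
  | thm {φ} : Prv Ax φ → Deduces Ax Γ φ
  | mp {φ ψ} : Deduces Ax Γ (φ.imp ψ) → Deduces Ax Γ φ → Deduces Ax Γ ψ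

namespace Deduces

variable {Ax : Set Formula} {Γ Δ : Set Formula} {a b φ : Formula}

theorem mono (hΓ : Γ ⊆ Δ) (h : Deduces Ax Γ φ) : Deduces Ax Δ φ := by
  induction h with
  | hyp h => exact hyp (hΓ h)
  | thm h => exact thm h
  | mp _ _ ih₁ ih₂ => exact ih₁.mp ih₂

theorem prv (h : Deduces Ax ∅ φ) : Prv Ax φ := by
  induction h with
  | hyp h => exact absurd h (Set.notMem_empty _)
  | thm h => exact h
  | mp _ _ ih₁ ih₂ => exact ih₁.mp ih₂

theorem imp_intro (h : Deduces Ax (insert a Γ) φ) : Deduces Ax Γ (a.imp φ) := by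
  induction h with
  | @hyp φ h =>
    rcases h with rfl | h
    · exact thm (Prv.imp_self' _)
    · exact (thm (Prv.ax1' φ a)).mp (hyp h)
  | @thm φ h => exact (thm (Prv.ax1' φ a)).mp (thm h)
  | @mp φ ψ _ _ ih₁ ih₂ => exact ((thm (Prv.ax2' a φ ψ)).mp ih₁).mp ih₂

theorem mem_insert_self : Deduces Ax (insert a Γ) a := hyp (Set.mem_insert a Γ)

theorem weaken (h : Deduces Ax Γ φ) : Deduces Ax (insert a Γ) φ :=
  h.mono (Set.subset_insert a Γ)

-- Axiom 3 at `φ` and `⊤ = ⊥ → ⊥` turns `¬φ → ¬⊤` into `⊤ → φ`.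
theorem by_contra (h : Deduces Ax (insert φ.neg Γ) bot) : Deduces Ax Γ φ :=
  ((thm (Prv.ax3' φ top)).mp ((thm (Prv.ax1' bot top)).mp h).imp_intro).mp
    (thm (Prv.imp_self' bot))

theorem cases (h₁ : Deduces Ax (insert a Γ) φ) (h₀ : Deduces Ax (insert a.neg Γ) φ) :
    Deduces Ax Γ φ := by
  apply by_contra
  have hna : Deduces Ax (insert φ.neg Γ) a.neg :=
    imp_intro (mem_insert_self.weaken.mp (h₁.mono (Set.insert_subset_insert
      (Set.subset_insert _ _))))
  exact mem_insert_self.mp ((h₀.mono (Set.insert_subset_insert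
    (Set.subset_insert _ _))).imp_intro.mp hna)

theorem imp_of_neg (h : Deduces Ax Γ a.neg) : Deduces Ax Γ (a.imp b) :=
  imp_intro (by_contra (h.weaken.weaken.mp (mem_insert_self.weaken)))

theorem imp_of_right (h : Deduces Ax Γ b) : Deduces Ax Γ (a.imp b) :=
  (thm (Prv.ax1' b a)).mp h

theorem neg_imp (ha : Deduces Ax Γ a) (hb : Deduces Ax Γ b.neg) : Deduces Ax Γ (a.imp b).neg :=
  imp_intro (hb.weaken.mp (mem_insert_self.mp ha.weaken))

end Deduces

def beval (g : Formula → Bool) : Formula → Bool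
  | .bot => false
  | .imp a b => !(beval g a) || beval g b
  | x => g x

section Beval

variable (g : Formula → Bool) (a b : Formula)

@[simp] theorem beval_bot : beval g bot = false := rfl
@[simp] theorem beval_imp : beval g (a.imp b) = (!(beval g a) || beval g b) := rfl
@[simp] theorem beval_box : beval g a.box = g a.box := rfl
@[simp] theorem beval_neg : beval g a.neg = !(beval g a) := by simp [Formula.neg]
@[simp] theorem beval_top : beval g top = true := rfl
@[simp] theorem beval_and : beval g (a.and b) = (beval g a && beval g b) := by
  simp [Formula.and]
@[simp] theorem beval_or : beval g (a.or b) = (beval g a || beval g b) := by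
  simp [Formula.or]
@[simp] theorem beval_dia : beval g a.dia = !(g a.neg.box) := by simp [Formula.dia]

@[simp] theorem beval_listConj : ∀ L : List Formula,
    beval g (listConj L) = L.all (beval g)
  | [] => by simp [listConj]
  | [a] => by simp [listConj]
  | a :: b :: l => by simp [listConj, beval_listConj (b :: l)]

@[simp] theorem beval_listDisj : ∀ L : List Formula,
    beval g (listDisj L) = L.any (beval g)
  | [] => by simp [listDisj]
  | [a] => by simp [listDisj]
  | a :: b :: l => by simp [listDisj, beval_listDisj (b :: l)]

end Beval

def batoms : Formula → List Formula
  | .bot => []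
  | .imp a b => batoms a ++ batoms b
  | x => [x]

def literal (g : Formula → Bool) (a : Formula) : Formula := if g a then a else a.neg

def literals (g : Formula → Bool) (L : List Formula) : Set Formula :=
  {x | ∃ a ∈ L, x = literal g a}

section Kalmar

variable {Ax : Set Formula}

theorem literals_mono (g : Formula → Bool) {L L' : List Formula} (h : L ⊆ L') :
    literals g L ⊆ literals g L' := by
  rintro x ⟨a, ha, rfl⟩
  exact ⟨a, h ha, rfl⟩

/-- Kalmár's lemma. -/
theorem deduces_literal (g : Formula → Bool) :
    ∀ φ : Formula, Deduces Ax (literals g (batoms φ)) (literal (beval g) φ)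
  | .var _ | .const _ | .box _ => .hyp ⟨_, List.mem_singleton_self _, rfl⟩
  | .bot => .thm (Prv.imp_self' bot)
  | .imp a b => by
    have iha := (deduces_literal g a).mono
      (literals_mono g (List.subset_append_left (batoms a) (batoms b)))
    have ihb := (deduces_literal g b).mono
      (literals_mono g (List.subset_append_right (batoms a) (batoms b)))
    unfold literal at iha ihb ⊢
    cases ha : beval g a <;> cases hb : beval g b <;> simp only [ha, hb] at iha ihb <;>
      simp only [beval_imp, ha, hb, Bool.not_true, Bool.not_false, Bool.true_or,
        Bool.false_or, if_true, if_false, Bool.false_eq_true]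
    · exact iha.imp_of_neg
    · exact ihb.imp_of_right
    · exact iha.neg_imp ihb
    · exact ihb.imp_of_right

theorem literals_update_cons_subset (g : Formula → Bool) (a : Formula) (v : Bool)
    (L : List Formula) :
    literals (Function.update g a v) (a :: L) ⊆
      insert (literal (Function.update g a v) a) (literals g L) := by
  rintro x ⟨c, hc, rfl⟩
  by_cases hca : c = a
  · exact hca ▸ Set.mem_insert _ _
  · exact Or.inr ⟨c, (List.mem_cons.mp hc).resolve_left hca,
      by simp only [literal, Function.update_of_ne hca]⟩

theorem Prv.of_forall_deduces_literals {φ : Formula} :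
    ∀ L : List Formula, (∀ g, Deduces Ax (literals g L) φ) → Prv Ax φ
  | [], h => ((h fun _ => true).mono (by rintro x ⟨a, ha, rfl⟩; simp at ha)).prv
  | a :: L, h => Prv.of_forall_deduces_literals L fun g => Deduces.cases
      (by simpa [literal] using (h _).mono (literals_update_cons_subset g a true L))
      (by simpa [literal] using (h _).mono (literals_update_cons_subset g a false L))

end Kalmar

section Completeness

variable {Ax : Set Formula}

theorem Prv.of_forall_beval {L : List Formula} {φ : Formula} (hL : ∀ ψ ∈ L, Prv Ax ψ)
    (h : ∀ g, (∀ ψ ∈ L, beval g ψ = true) → beval g φ = true) : Prv Ax φ := by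
  set A := batoms φ ++ L.flatMap batoms
  refine of_forall_deduces_literals A fun g => ?_
  have hlit : ∀ χ, batoms χ ⊆ A → Deduces Ax (literals g A) (literal (beval g) χ) :=
    fun χ hχ => (deduces_literal g χ).mono (literals_mono g hχ)
  by_cases hφ : beval g φ = true
  · simpa [literal, hφ] using hlit φ (List.subset_append_left _ _)
  · obtain ⟨ψ, hψ, hgψ⟩ : ∃ ψ ∈ L, beval g ψ = false := by
      by_contra! hne
      exact hφ (h g fun ψ hψ => by simpa using hne ψ hψ)
    have hnψ := hlit ψ
      (List.subset_append_of_subset_right _ fun _ hx => List.mem_flatMap_of_mem hψ hx)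
    simp only [literal, hgψ] at hnψ
    exact Deduces.by_contra (hnψ.weaken.mp (.thm (hL ψ hψ)))

theorem Prv.of_taut {φ : Formula} (h : ∀ g, beval g φ = true) : Prv Ax φ :=
  of_forall_beval (L := []) (by simp) fun g _ => h g

theorem Prv.of_beval_imp {a φ : Formula} (ha : Prv Ax a)
    (h : ∀ g, beval g a = true → beval g φ = true) : Prv Ax φ :=
  of_forall_beval (L := [a]) (by simpa using ha) (by simpa using h)

theorem Prv.of_beval_imp₂ {a b φ : Formula} (ha : Prv Ax a) (hb : Prv Ax b)
    (h : ∀ g, beval g a = true → beval g b = true → beval g φ = true) : Prv Ax φ :=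
  of_forall_beval (L := [a, b]) (by simp [ha, hb]) (by simpa using h)

theorem Prv.box_listConj_imp : ∀ {L : List Formula} {φ : Formula},
    Prv Ax ((listConj L).imp φ) → Prv Ax ((listConj (L.map box)).imp φ.box)
  | [], φ, h => of_beval_imp (of_beval_imp (φ := φ) h (by simp)).nec (by simp)
  | a :: L, φ, h => by
    have ih := box_listConj_imp (L := L) (φ := a.imp φ) (of_beval_imp h (by simp; grind))
    exact of_beval_imp₂ ih (axK' a φ) (by simp; grind)

theorem Prv.not_and_comm {a b : Formula} (h : Prv Ax (a.and b).neg) : Prv Ax (b.and a).neg :=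
  of_beval_imp h (by simp; grind)

end Completeness

section Injectivity

@[simp] theorem Formula.and_inj {a b c d : Formula} : a.and b = c.and d ↔ a = c ∧ b = d := by
  simp [Formula.and, Formula.neg]

@[simp] theorem Formula.dia_inj {a b : Formula} : a.dia = b.dia ↔ a = b := by
  simp [dia, Formula.neg]

theorem listConj_inj_of_length_eq : ∀ {l₁ l₂ : List Formula}, l₁.length = l₂.length →
    listConj l₁ = listConj l₂ → l₁ = l₂
  | [], [], _, _ => rfl
  | [_], [_], _, h => by simpa [listConj] using h
  | _ :: _ :: _, _ :: _ :: _, hl, h => by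
    simp only [listConj, Formula.and_inj] at h
    simpa [h.1] using listConj_inj_of_length_eq (by simpa using hl) h.2
  | [], _ :: _, hl, _ | _ :: _, [], hl, _ | [_], _ :: _ :: _, hl, _
  | _ :: _ :: _, [_], hl, _ => by simp at hl

theorem listConj_map_dia_injective :
    Function.Injective fun l : List Formula => listConj (l.map dia)
  | [], [], _ => rfl
  | [_], [_], h => by simpa [listConj] using h
  | _ :: b :: l, _ :: d :: m, h => by
    simp only [List.map_cons, listConj, Formula.and_inj, Formula.dia_inj] at h
    simpa [h.1] using
      listConj_map_dia_injective (a₁ := b :: l) (a₂ := d :: m) h.2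
  | [], [_], h | [], _ :: _ :: _, h | [_], [], h | _ :: _ :: _, [], h
  | [_], _ :: _ :: _, h | _ :: _ :: _, [_], h => by
    simp [listConj, dia, Formula.and, Formula.neg, top] at h

theorem Formula.ne_neg (φ : Formula) : φ ≠ φ.neg := by
  intro h
  have := congrArg sizeOf h
  simp only [Formula.neg, Formula.imp.sizeOf_spec] at this
  omega

theorem List.eq_of_sublist_of_mem_iff {α : Type*} {l S S' : List α} (hl : l.Nodup)
    (hS : S.Sublist l) (hS' : S'.Sublist l) (h : ∀ a, a ∈ S ↔ a ∈ S') : S = S' :=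
  (hl.perm_iff_eq_of_sublist hS hS').mp
    ((List.perm_ext_iff_of_nodup (hl.sublist hS) (hl.sublist hS')).mpr h)

theorem List.exists_mem_not_mem_of_sublist_of_ne {α : Type*} {l S S' : List α} (hl : l.Nodup)
    (hS : S.Sublist l) (hS' : S'.Sublist l) (hne : S ≠ S') :
    ∃ a, a ∈ S ∧ a ∉ S' ∨ a ∈ S' ∧ a ∉ S := by
  by_contra! h
  exact hne (List.eq_of_sublist_of_mem_iff hl hS hS' fun a => ⟨(h a).1, (h a).2⟩)

theorem hatT_inj {n : ℕ} {T T' : List ℕ} (hT : T.Sublist (List.range (n + 1)))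
    (hT' : T'.Sublist (List.range (n + 1))) (h : hatT n T = hatT n T') : T = T' := by
  have hlit := List.map_inj_left.mp (listConj_inj_of_length_eq (by simp) h)
  refine List.eq_of_sublist_of_mem_iff List.nodup_range hT hT' fun i => ?_
  by_cases hi : i ∈ List.range (n + 1)
  · have := hlit i hi
    by_cases hiT : i ∈ T <;> by_cases hiT' : i ∈ T' <;> simp only [hiT, hiT', ↓reduceIte] at this
    exacts [iff_of_true hiT hiT', absurd this (Formula.ne_neg _),
      absurd this.symm (Formula.ne_neg _), iff_of_false hiT hiT']
  · exact iff_of_false (fun h => hi (hT.subset h)) (fun h => hi (hT'.subset h))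

theorem canonAlpha_inj {n : ℕ} {S S' : List Formula} {T T' : List ℕ}
    (h : canonAlpha n S T = canonAlpha n S' T') : S = S' ∧ hatT n T = hatT n T' := by
  simp only [canonAlpha, Formula.and_inj] at h
  exact ⟨listConj_map_dia_injective h.1, h.2.2⟩

theorem nodup_C (n : ℕ) : ∀ h, (C h n).Nodup
  | 0 => (List.nodup_sublists.mpr List.nodup_range).map_on fun _ hT _ hT' h =>
      hatT_inj (List.mem_sublists.mp hT) (List.mem_sublists.mp hT') h
  | h + 1 => by
    refine List.nodup_flatMap.mpr ⟨fun S _ => ?_, ?_⟩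
    · exact (List.nodup_sublists.mpr List.nodup_range).map_on fun _ hT _ hT' h =>
        hatT_inj (List.mem_sublists.mp hT) (List.mem_sublists.mp hT') (canonAlpha_inj h).2
    · refine (List.nodup_sublists.mpr (nodup_C n h)).pairwise_of_forall_ne
        fun S _ S' _ hne => ?_
      simp only [Function.onFun, List.disjoint_left, List.mem_map]
      rintro _ ⟨T, _, rfl⟩ ⟨T', _, h⟩
      exact hne (canonAlpha_inj h).1.symm

end Injectivity

section Canonical

variable {Ax : Set Formula}

theorem beval_hatT (g : Formula → Bool) (n : ℕ) (T : List ℕ) :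
    beval g (hatT n T) = true ↔ ∀ i < n + 1, beval g (atom i) = decide (i ∈ T) := by
  simp only [hatT, beval_listConj, List.all_map, List.all_eq_true, List.mem_range,
    Function.comp_apply, apply_ite, beval_neg]
  refine forall₂_congr fun i _ => ?_
  by_cases hi : i ∈ T <;> simp [hi]

theorem prv_listDisj_hatT (n : ℕ) :
    Prv Ax (listDisj ((List.range (n + 1)).sublists.map (hatT n))) := by
  refine Prv.of_taut fun g => ?_
  simp only [beval_listDisj, List.any_map, List.any_eq_true, Function.comp_apply]
  refine ⟨(List.range (n + 1)).filter (fun i => beval g (atom i)),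
    List.mem_sublists.mpr List.filter_sublist, ?_⟩
  simp +contextual [beval_hatT]

theorem prv_listDisj_dia_box {X : List Formula} (hX : Prv Ax (listDisj X)) :
    Prv Ax (listDisj (X.sublists.map fun S => (listConj (S.map dia)).and (listDisj S).box)) := by
  set boxedAway : List Formula → Formula := fun S =>
    (listConj ((listDisj X :: (X.filter (· ∉ S)).map neg).map box)).imp (listDisj S).box
  have hboxedAway : ∀ S, Prv Ax (boxedAway S) :=
    fun S => Prv.box_listConj_imp (Prv.of_taut fun g => by simp; grind)
  refine Prv.of_forall_beval (L := (listDisj X).box :: X.sublists.map boxedAway)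
    (by simpa using ⟨hX.nec, fun S _ => hboxedAway S⟩) fun g hg => ?_
  -- the disjunct for the set of `ψ ∈ X` that are possible under `g`
  set S := X.filter fun ψ => !g ψ.neg.box
  have hS : S ∈ X.sublists := List.mem_sublists.mpr List.filter_sublist
  simp only [List.mem_cons, List.mem_map, forall_eq_or_imp, beval_box] at hg
  obtain ⟨hbox, hg⟩ := hg
  simp only [beval_listDisj, List.any_map, List.any_eq_true]
  refine ⟨S, hS, ?_⟩
  have := hg _ ⟨S, hS, rfl⟩
  simp [boxedAway, S, hbox] at this ⊢
  grind

theorem prv_listDisj_C (n : ℕ) : ∀ h, Prv Ax (listDisj (C h n))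
  | 0 => prv_listDisj_hatT n
  | h + 1 => by
    refine Prv.of_beval_imp₂ (prv_listDisj_dia_box (prv_listDisj_C n h)) (prv_listDisj_hatT n)
      fun g hS hT => ?_
    simp only [beval_listDisj, List.any_map, List.any_eq_true, Function.comp_apply] at hS hT ⊢
    obtain ⟨S, hS, hgS⟩ := hS
    obtain ⟨T, hT, hgT⟩ := hT
    refine ⟨canonAlpha n S T, List.mem_flatMap.mpr ⟨S, hS, List.mem_map_of_mem hT⟩, ?_⟩
    simp_all [canonAlpha]

theorem prv_not_and_hatT {n : ℕ} {T T' : List ℕ} (hT : T.Sublist (List.range (n + 1)))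
    (hT' : T'.Sublist (List.range (n + 1))) (hne : T ≠ T') :
    Prv Ax ((hatT n T).and (hatT n T')).neg := by
  obtain ⟨i, hi⟩ := List.exists_mem_not_mem_of_sublist_of_ne List.nodup_range hT hT' hne
  have hin : i < n + 1 := by
    rcases hi with ⟨h, _⟩ | ⟨h, _⟩
    exacts [List.mem_range.mp (hT.subset h), List.mem_range.mp (hT'.subset h)]
  refine Prv.of_taut fun g => ?_
  have h₁ := beval_hatT g n T
  have h₂ := beval_hatT g n T'
  simp
  grind

theorem prv_not_and_canonAlpha_of_mem {n : ℕ} {S S' : List Formula} {T T' : List ℕ}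
    {ψ : Formula} (hψ : ψ ∈ S) (hS' : ∀ χ ∈ S', Prv Ax (ψ.and χ).neg) :
    Prv Ax ((canonAlpha n S T).and (canonAlpha n S' T')).neg := by
  have hnψ : Prv Ax ((listDisj S').imp ψ.neg) :=
    Prv.of_forall_beval (L := S'.map fun χ => (ψ.and χ).neg) (by simpa using hS')
      fun g hg => by simp at hg ⊢; grind
  refine Prv.of_beval_imp (Prv.box_mono hnψ) fun g h => ?_
  simp [canonAlpha] at h ⊢
  grind

theorem prv_not_and_of_mem_C (n : ℕ) :
    ∀ h, ∀ α ∈ C h n, ∀ β ∈ C h n, α ≠ β → Prv Ax (α.and β).neg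
  | 0, α, hα, β, hβ, hne => by
    simp only [C, List.mem_map, List.mem_sublists] at hα hβ
    obtain ⟨T, hT, rfl⟩ := hα
    obtain ⟨T', hT', rfl⟩ := hβ
    exact prv_not_and_hatT hT hT' (by rintro rfl; exact hne rfl)
  | h + 1, α, hα, β, hβ, hne => by
    simp only [C, List.mem_flatMap, List.mem_map, List.mem_sublists] at hα hβ
    obtain ⟨S, hS, T, hT, rfl⟩ := hα
    obtain ⟨S', hS', T', hT', rfl⟩ := hβ
    by_cases hTT : T = T'
    · subst hTT
      obtain ⟨ψ, ⟨hψS, hψS'⟩ | ⟨hψS', hψS⟩⟩ :=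
        List.exists_mem_not_mem_of_sublist_of_ne (nodup_C n h) hS hS' (by rintro rfl; exact hne rfl)
      · exact prv_not_and_canonAlpha_of_mem hψS fun χ hχ =>
          prv_not_and_of_mem_C n h ψ (hS.subset hψS) χ (hS'.subset hχ)
            (by rintro rfl; exact hψS' hχ)
      · exact (prv_not_and_canonAlpha_of_mem hψS' fun χ hχ =>
          prv_not_and_of_mem_C n h ψ (hS'.subset hψS') χ (hS.subset hχ)
            (by rintro rfl; exact hψS hχ)).not_and_comm
    · exact Prv.of_beval_imp (prv_not_and_hatT hT hT' hTT) fun g h => by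
        simp [canonAlpha] at h ⊢
        grind

theorem prv_bigOplus {X : List Formula} (hX : Prv Ax (listDisj X))
    (hne : ∀ α ∈ X, ∀ β ∈ X, α ≠ β → Prv Ax (α.and β).neg) : Prv Ax (bigOplus X) := by
  refine Prv.of_forall_beval (L := listDisj X ::
      X.flatMap fun α => (X.filter (· ≠ α)).map fun β => (α.and β).neg) ?_ fun g hg => ?_
  · simp only [List.mem_cons, List.mem_flatMap, List.mem_map, List.mem_filter]
    rintro _ (rfl | ⟨α, hα, β, ⟨hβ, hβα⟩, rfl⟩)
    exacts [hX, hne α hα β hβ (of_decide_eq_true hβα).symm]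
  · obtain ⟨hX, hne⟩ := List.forall_mem_cons.mp hg
    obtain ⟨α, hα, hgα⟩ := List.any_eq_true.mp ((beval_listDisj g X).symm.trans hX)
    simp only [bigOplus, beval_listDisj, List.any_map, List.any_eq_true, Function.comp_apply,
      beval_and, beval_listConj, List.all_map, List.all_eq_true, Bool.and_eq_true]
    refine ⟨α, hα, hgα, fun β hβ => ?_⟩
    simpa [hgα] using hne _ (List.mem_flatMap.mpr ⟨α, hα, List.mem_map_of_mem hβ⟩)

end Canonical

theorem bigOplus_provable_general (Sig : Set ModalAxiom) (h n : ℕ) :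
    Prv (KAxioms Sig) (bigOplus (C h n)) :=
  prv_bigOplus (prv_listDisj_C n h) (prv_not_and_of_mem_C n h)

/-- For Σ ⊆ {T,B,4,D} and all h, n, ⊢_{KΣ} ⊕C_{h,n}. -/
theorem bigOplus_provable (Sig : Set ModalAxiom)
    (hSig : Sig ⊆ {ModalAxiom.T, ModalAxiom.B, ModalAxiom.four, ModalAxiom.D})
    (h n : ℕ) :
    Prv (KAxioms Sig) (bigOplus (C h n)) :=
  bigOplus_provable_general Sig h n

end ModalSOA
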